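/- For each s ∈ {1,…,n}, H(s) = min_{i∈{0,…,s−1}, α∈ℝ} P_s(i,α). -/

import Mathlib

open scoped Classical

/-- `h_s(y; z_{1:s})` (0-indexed: coordinates `0,…,s−1` of `y`,`z`,`l`,`u` play the role of
the paper's coordinates `1,…,s`): the objective of the fused ℓ₀ proximal subproblem
`(1/2)Σ_{j<s}(y_j−z_j)² + λ₁ Σ_{j<s−1}|y_j−y_{j+1}|₀ + Σ_{j<s} ω_j(y_j)`,
with value `⊤` outside the box constraints. -/
noncomputable def hfun (lam1 lam2 : ℝ) (l u z : ℕ → ℝ) (s : ℕ) (y : ℕ → ℝ) : EReal :=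
  if ∀ j ∈ Finset.range s, l j ≤ y j ∧ y j ≤ u j then
    ((((1 : ℝ) / 2) * ∑ j ∈ Finset.range s, (y j - z j) ^ 2
      + lam1 * ∑ j ∈ Finset.range (s - 1), (if y j = y (j + 1) then (0 : ℝ) else 1)
      + lam2 * ∑ j ∈ Finset.range s, (if y j = 0 then (0 : ℝ) else 1) : ℝ) : EReal)
  else ⊤

/-- `H(0) = −λ₁` and, for `s ≥ 1`, `H(s) = min_{y ∈ ℝˢ} h_s(y; z_{1:s})`
(the minimum is attained; it equals the infimum). -/
noncomputable def Hfun (lam1 lam2 : ℝ) (l u z : ℕ → ℝ) : ℕ → EReal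
  | 0 => ((-lam1 : ℝ) : EReal)
  | s + 1 => ⨅ y : ℕ → ℝ, hfun lam1 lam2 l u z (s + 1) y

/-- `P_s(i,α) = H(i) + (1/2)Σ_{j=i+1}^{s}(α−z_j)² + Σ_{j=i+1}^{s} ω_j(α) + λ₁`
(0-indexed: the sums run over `j ∈ [i, s)`). -/
noncomputable def Pfun (lam1 lam2 : ℝ) (l u z : ℕ → ℝ) (s i : ℕ) (α : ℝ) : EReal :=
  Hfun lam1 lam2 l u z i +
    (if ∀ j ∈ Finset.Ico i s, l j ≤ α ∧ α ≤ u j then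
      ((((1 : ℝ) / 2) * ∑ j ∈ Finset.Ico i s, (α - z j) ^ 2
        + lam2 * ((s - i : ℕ) : ℝ) * (if α = 0 then (0 : ℝ) else 1) + lam1 : ℝ) : EReal)
    else ⊤)

/-- `P_s^*(α) = min_{i ∈ {0,…,s−1}} P_s(i,α)`. -/
noncomputable def Pstar (lam1 lam2 : ℝ) (l u z : ℕ → ℝ) (s : ℕ) (α : ℝ) : EReal :=
  ⨅ i ∈ Finset.range s, Pfun lam1 lam2 l u z s i α


/-! Split an admissible `y` at the start `i` of its last constant run `y_i = ⋯ = y_{s-1} = α`: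
its cost is the cost of the prefix `y_{<i}`, plus the cost of the constant block, plus the jump
penalty `λ₁` (absent when `i = 0`, which `H(0) = -λ₁` compensates). Minimizing over the prefix
gives `P_s(i, α) ≤ h_s(y)`. Conversely, gluing the block `α` onto any admissible prefix costs at
most `P_s(i, α)`, because a jump costs at most `λ₁ ≥ 0`. -/

open Finset

lemma EReal.le_iInf_add_coe {ι : Sort*} {a : EReal} {f : ι → EReal} {c : ℝ}
    (h : ∀ i, a ≤ f i + c) : a ≤ (⨅ i, f i) + c :=
  (EReal.sub_le_iff_le_add (.inl (EReal.coe_ne_bot c)) (.inl (EReal.coe_ne_top c))).1 <|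
    le_iInf fun i => EReal.sub_le_of_le_add (h i)

lemma exists_start_of_last_run {β : Type*} (y : ℕ → β) (t : ℕ) :
    ∃ i ≤ t, (∀ j ∈ Ico i (t + 1), y j = y t) ∧ (i = 0 ∨ y (i - 1) ≠ y t) := by
  induction t with
  | zero => exact ⟨0, le_rfl, fun j hj => by simp_all, .inl rfl⟩
  | succ t ih =>
    by_cases hrun : y t = y (t + 1)
    · obtain ⟨i, hit, hy, hstart⟩ := ih
      refine ⟨i, by omega, fun j hj => ?_, hrun ▸ hstart⟩
      rcases Nat.lt_succ_iff_lt_or_eq.1 (mem_Ico.1 hj).2 with hjt | rfl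
      · rw [hy j (mem_Ico.2 ⟨(mem_Ico.1 hj).1, by omega⟩), hrun]
      · rfl
    · exact ⟨t + 1, le_rfl, fun j hj => by rw [(by simpa using hj : j = t + 1)], .inr hrun⟩

section FusedCost

variable {lam1 lam2 : ℝ} {z : ℕ → ℝ}

noncomputable def fusedCost (lam1 lam2 : ℝ) (z : ℕ → ℝ) (s : ℕ) (y : ℕ → ℝ) : ℝ :=
  ((1 : ℝ) / 2) * ∑ j ∈ range s, (y j - z j) ^ 2
    + lam1 * ∑ j ∈ range (s - 1), (if y j = y (j + 1) then (0 : ℝ) else 1)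
    + lam2 * ∑ j ∈ range s, (if y j = 0 then (0 : ℝ) else 1)

noncomputable def blockCost (lam2 : ℝ) (z : ℕ → ℝ) (i s : ℕ) (α : ℝ) : ℝ :=
  ((1 : ℝ) / 2) * ∑ j ∈ Ico i s, (α - z j) ^ 2
    + lam2 * ((s - i : ℕ) : ℝ) * (if α = 0 then (0 : ℝ) else 1)

lemma blockCost_add {i k s : ℕ} (hik : i ≤ k) (hks : k ≤ s) (α : ℝ) :
    blockCost lam2 z i k α + blockCost lam2 z k s α = blockCost lam2 z i s α := by
  simp only [blockCost, ← sum_Ico_consecutive _ hik hks, Nat.cast_sub hik, Nat.cast_sub hks,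
    Nat.cast_sub (hik.trans hks)]
  ring

@[simp]
lemma fusedCost_zero (y : ℕ → ℝ) : fusedCost lam1 lam2 z 0 y = 0 := by
  simp [fusedCost]

lemma fusedCost_succ (s : ℕ) (y : ℕ → ℝ) :
    fusedCost lam1 lam2 z (s + 1) y = fusedCost lam1 lam2 z s y + blockCost lam2 z s (s + 1) (y s)
      + if s = 0 then 0 else lam1 * (if y (s - 1) = y s then 0 else 1) := by
  cases s with
  | zero => simp [fusedCost, blockCost]
  | succ s =>
    simp only [fusedCost, blockCost, sum_range_succ, Nat.add_sub_cancel, Nat.Ico_succ_singleton,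
      sum_singleton]
    rw [if_neg s.succ_ne_zero, Nat.add_sub_cancel_left, Nat.cast_one]
    ring

lemma fusedCost_nonneg (h1 : 0 ≤ lam1) (h2 : 0 ≤ lam2) (s : ℕ) (y : ℕ → ℝ) :
    0 ≤ fusedCost lam1 lam2 z s y := by
  unfold fusedCost
  positivity

lemma fusedCost_congr {s : ℕ} {y y' : ℕ → ℝ} (h : ∀ j < s, y j = y' j) :
    fusedCost lam1 lam2 z s y = fusedCost lam1 lam2 z s y' := by
  induction s with
  | zero => simp
  | succ s ih =>
    rw [fusedCost_succ, fusedCost_succ, ih fun j hj => h j (by omega), h s (by omega),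
      h (s - 1) (by omega)]

lemma fusedCost_eq_add_blockCost {i s : ℕ} (his : i < s) {y : ℕ → ℝ} {α : ℝ}
    (hy : ∀ j ∈ Ico i s, y j = α) :
    fusedCost lam1 lam2 z s y = fusedCost lam1 lam2 z i y + blockCost lam2 z i s α
      + if i = 0 then 0 else lam1 * (if y (i - 1) = α then 0 else 1) := by
  induction s, his using Nat.le_induction with
  | base => rw [fusedCost_succ, hy i (by simp)]
  | succ s his ih =>
    have hs : s ≠ 0 := by omega
    rw [fusedCost_succ, ih fun j hj => hy j (by simp at hj ⊢; omega), hy s (by simp; omega),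
      hy (s - 1) (by simp; omega), if_neg hs, if_pos rfl,
      ← blockCost_add (by omega : i ≤ s) s.le_succ]
    ring

end FusedCost

section Values

variable {lam1 lam2 : ℝ} {l u z : ℕ → ℝ}

lemma hfun_eq_ite (s : ℕ) (y : ℕ → ℝ) :
    hfun lam1 lam2 l u z s y =
      if ∀ j ∈ range s, l j ≤ y j ∧ y j ≤ u j then ((fusedCost lam1 lam2 z s y : ℝ) : EReal)
      else ⊤ := rfl

lemma Pfun_eq_ite (s i : ℕ) (α : ℝ) :
    Pfun lam1 lam2 l u z s i α = Hfun lam1 lam2 l u z i +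
      if ∀ j ∈ Ico i s, l j ≤ α ∧ α ≤ u j then ((blockCost lam2 z i s α + lam1 : ℝ) : EReal)
      else ⊤ := rfl

lemma Hfun_eq_iInf {s : ℕ} (hs : s ≠ 0) :
    Hfun lam1 lam2 l u z s = ⨅ y, hfun lam1 lam2 l u z s y := by
  obtain ⟨t, rfl⟩ := Nat.exists_eq_succ_of_ne_zero hs
  rfl

lemma Hfun_le_fusedCost {s : ℕ} (hs : s ≠ 0) {y : ℕ → ℝ}
    (hy : ∀ j ∈ range s, l j ≤ y j ∧ y j ≤ u j) :
    Hfun lam1 lam2 l u z s ≤ fusedCost lam1 lam2 z s y := by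
  rw [Hfun_eq_iInf hs]
  exact (iInf_le _ y).trans_eq (if_pos hy)

lemma Hfun_ne_bot (h1 : 0 ≤ lam1) (h2 : 0 ≤ lam2) (i : ℕ) : Hfun lam1 lam2 l u z i ≠ ⊥ := by
  rcases eq_or_ne i 0 with rfl | hi
  · exact EReal.coe_ne_bot _
  · refine ne_bot_of_le_ne_bot EReal.zero_ne_bot ?_
    rw [Hfun_eq_iInf hi]
    refine le_iInf fun y => ?_
    rw [hfun_eq_ite]
    split_ifs
    · exact EReal.coe_nonneg.2 (fusedCost_nonneg h1 h2 i y)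
    · exact le_top

lemma Pfun_zero_of_mem_box {s : ℕ} {α : ℝ} (hα : ∀ j ∈ Ico 0 s, l j ≤ α ∧ α ≤ u j) :
    Pfun lam1 lam2 l u z s 0 α = blockCost lam2 z 0 s α := by
  rw [Pfun_eq_ite, if_pos hα]
  show ((-lam1 : ℝ) : EReal) + _ = _
  rw [← EReal.coe_add, EReal.coe_eq_coe_iff]
  ring

lemma Hfun_le_fusedCost_add_blockCost (h1 : 0 ≤ lam1) {s i : ℕ} (hi : i ≠ 0) (his : i < s)
    {α : ℝ} (hα : ∀ j ∈ Ico i s, l j ≤ α ∧ α ≤ u j) {y' : ℕ → ℝ}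
    (hy' : ∀ j ∈ range i, l j ≤ y' j ∧ y' j ≤ u j) :
    Hfun lam1 lam2 l u z s ≤ fusedCost lam1 lam2 z i y' + blockCost lam2 z i s α + lam1 := by
  set y : ℕ → ℝ := fun j => if j < i then y' j else α
  have hyα : ∀ j ∈ Ico i s, y j = α := fun j hj => if_neg (by simp at hj; omega)
  have hy : ∀ j ∈ range s, l j ≤ y j ∧ y j ≤ u j := by
    intro j hj
    by_cases hji : j < i
    · simpa [y, hji] using hy' j (mem_range.2 hji)
    · simpa [y, hji] using hα j (by simp at hj ⊢; omega)
  have hprefix : fusedCost lam1 lam2 z i y = fusedCost lam1 lam2 z i y' :=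
    fusedCost_congr fun j hj => if_pos hj
  have hjump : lam1 * (if y (i - 1) = α then 0 else 1) ≤ lam1 :=
    mul_le_of_le_one_right h1 (by split_ifs <;> norm_num)
  refine (Hfun_le_fusedCost (by omega) hy).trans (EReal.coe_le_coe_iff.2 ?_)
  rw [fusedCost_eq_add_blockCost his hyα, if_neg hi, hprefix]
  linarith

lemma Hfun_le_Pfun (h1 : 0 ≤ lam1) (h2 : 0 ≤ lam2) {s i : ℕ} (his : i < s) (α : ℝ) :
    Hfun lam1 lam2 l u z s ≤ Pfun lam1 lam2 l u z s i α := by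
  by_cases hα : ∀ j ∈ Ico i s, l j ≤ α ∧ α ≤ u j
  swap
  · rw [Pfun_eq_ite, if_neg hα, EReal.add_top_of_ne_bot (Hfun_ne_bot h1 h2 i)]
    exact le_top
  rcases eq_or_ne i 0 with rfl | hi
  · rw [Pfun_zero_of_mem_box hα]
    refine (Hfun_le_fusedCost (y := fun _ => α) (by omega)
      fun j hj => hα j (by simpa using hj)).trans_eq ?_
    rw [fusedCost_eq_add_blockCost his fun _ _ => rfl]
    simp
  rw [Pfun_eq_ite, if_pos hα, Hfun_eq_iInf hi]
  refine EReal.le_iInf_add_coe fun y' => ?_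
  rw [hfun_eq_ite]
  split_ifs with hy'
  · rw [← EReal.coe_add, ← add_assoc]
    exact Hfun_le_fusedCost_add_blockCost h1 hi his hα hy'
  · simp

lemma exists_Pfun_le_hfun {s : ℕ} (hs : s ≠ 0) (y : ℕ → ℝ) :
    ∃ i < s, ∃ α, Pfun lam1 lam2 l u z s i α ≤ hfun lam1 lam2 l u z s y := by
  obtain ⟨t, rfl⟩ : ∃ t, s = t + 1 := ⟨s - 1, by omega⟩
  rw [hfun_eq_ite]
  split_ifs with hy
  swap
  · exact ⟨0, t.succ_pos, 0, le_top⟩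
  obtain ⟨i, hit, hrun, hstart⟩ := exists_start_of_last_run y t
  have hα : ∀ j ∈ Ico i (t + 1), l j ≤ y t ∧ y t ≤ u j := fun j hj =>
    hrun j hj ▸ hy j (by simp at hj ⊢; omega)
  have hcost := fusedCost_eq_add_blockCost (lam1 := lam1) (lam2 := lam2) (z := z)
    (Nat.lt_succ_of_le hit) hrun
  refine ⟨i, Nat.lt_succ_of_le hit, y t, ?_⟩
  rcases eq_or_ne i 0 with rfl | hi
  · rw [Pfun_zero_of_mem_box hα, hcost]
    simp
  rw [Pfun_eq_ite, if_pos hα, hcost, if_neg hi, if_neg (hstart.resolve_left hi)]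
  have hprefix : Hfun lam1 lam2 l u z i ≤ fusedCost lam1 lam2 z i y :=
    Hfun_le_fusedCost hi fun j hj => hy j (by simp at hj ⊢; omega)
  refine (add_le_add_left hprefix _).trans_eq ?_
  rw [← EReal.coe_add, EReal.coe_eq_coe_iff]
  ring

end Values

theorem stmt3_general (lam1 lam2 : ℝ) (hlam1 : 0 < lam1) (hlam2 : 0 < lam2)
    (l u z : ℕ → ℝ)
    (s : ℕ) (hs1 : 1 ≤ s) :
    Hfun lam1 lam2 l u z s = ⨅ i ∈ Finset.range s, ⨅ α : ℝ, Pfun lam1 lam2 l u z s i α := by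
  have hs : s ≠ 0 := by omega
  refine le_antisymm (le_iInf₂ fun i hi => le_iInf fun α =>
    Hfun_le_Pfun hlam1.le hlam2.le (mem_range.1 hi) α) ?_
  rw [Hfun_eq_iInf hs]
  refine le_iInf fun y => ?_
  obtain ⟨i, hi, α, hle⟩ := exists_Pfun_le_hfun hs y
  exact (iInf₂_le i (mem_range.2 hi)).trans ((iInf_le _ α).trans hle)

/-- for each `s ∈ {1,…,n}`, `H(s) = min_{i∈{0,…,s−1}, α∈ℝ} P_s(i,α)`. -/
theorem stmt3 (n : ℕ) (hn : 1 ≤ n) (lam1 lam2 : ℝ) (hlam1 : 0 < lam1) (hlam2 : 0 < lam2)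
    (l u z : ℕ → ℝ) (hlu : ∀ i < n, l i ≤ 0 ∧ 0 ≤ u i)
    (s : ℕ) (hs1 : 1 ≤ s) (hsn : s ≤ n) :
    Hfun lam1 lam2 l u z s = ⨅ i ∈ Finset.range s, ⨅ α : ℝ, Pfun lam1 lam2 l u z s i α :=
  stmt3_general lam1 lam2 hlam1 hlam2 l u z s hs1
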